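/- arXiv:1305.0619 — 7 statements merged into one kernel-verified Lean document; each statement's English description precedes it below -/
import Mathlib

section
/- For signal-to-noise ratios 0 < s1 < s2 and any power fraction p ∈ (0,1), the SC region dominates TS in the sense that there exists q ∈ (0,1) with log2(1 + q·s2) = p·log2(1 + s2) and log2(1 + (1-q)·s1/(q·s1+1)) ≥ (1-p)·log2(1+s1), with strict inequality when s1 < s2. -/
theorem sc_dominates_ts (s1 s2 : ℝ) (hs1 : 0 < s1) (hs12 : s1 < s2) :
    ∀ p : ℝ, 0 < p → p < 1 →
      ∃ q : ℝ, 0 < q ∧ q < 1 ∧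
        Real.logb 2 (1 + q * s2) = p * Real.logb 2 (1 + s2) ∧
        Real.logb 2 (1 + (1 - q) * s1 / (q * s1 + 1)) > (1 - p) * Real.logb 2 (1 + s1) := by
  intro p hp hp1
  have hs2 : 0 < s2 := hs1.trans hs12
  set A := (1 + s2) ^ p with hA
  have h1s2 : (1:ℝ) < 1 + s2 := by linarith
  have hA1 : 1 < A := Real.one_lt_rpow_iff_of_pos (by linarith) |>.2 (Or.inl ⟨h1s2, hp⟩)
  have hA2 : A < 1 + s2 := by
    calc A < (1 + s2) ^ (1:ℝ) := Real.rpow_lt_rpow_of_exponent_lt h1s2 hp1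
    _ = 1 + s2 := Real.rpow_one _
  refine ⟨(A - 1) / s2, div_pos (by linarith) hs2, ?_, ?_, ?_⟩
  · rw [div_lt_one hs2]; linarith
  · have h : 1 + (A - 1) / s2 * s2 = A := by field_simp; ring
    rw [h, hA, Real.logb, Real.logb, Real.log_rpow (by linarith)]
    ring
  · set q := (A - 1) / s2 with hq
    have hq0 : 0 < q := div_pos (by linarith) hs2
    have hq1 : q < 1 := by rw [hq, div_lt_one hs2]; linarith
    -- key concavity inequality: 1 + q * s1 < (1 + s1) ^ p
    have key : 1 + q * s1 < (1 + s1) ^ p := by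
      have hc := (Real.strictConcaveOn_rpow hp hp1).2
        (Set.mem_Ici.2 (by norm_num : (0:ℝ) ≤ 1))
        (Set.mem_Ici.2 (by linarith : (0:ℝ) ≤ 1 + s2))
        (by intro h; linarith)
        (show 0 < 1 - s1 / s2 by
          have := (div_lt_one hs2).2 hs12; linarith)
        (show 0 < s1 / s2 from by positivity)
        (by ring)
      simp only [smul_eq_mul] at hc
      have h1 : (1 - s1 / s2) * (1:ℝ) + (s1 / s2) * (1 + s2) = 1 + s1 := by
        field_simp; ring
      rw [h1, Real.one_rpow] at hc
      have h3 : 1 + q * s1 = (1 - s1 / s2) * 1 + s1 / s2 * A := by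
        rw [hq]; field_simp; ring
      linarith [hc]
    have h1qs1 : 0 < q * s1 + 1 := by positivity
    have hrw : 1 + (1 - q) * s1 / (q * s1 + 1) = (1 + s1) / (1 + q * s1) := by
      field_simp; ring
    rw [hrw]
    have hb : (1:ℝ) < 2 := one_lt_two
    have hlog1 : Real.logb 2 ((1 + s1) / (1 + q * s1)) =
        Real.logb 2 (1 + s1) - Real.logb 2 (1 + q * s1) :=
      Real.logb_div (by linarith) (by linarith)
    have hlog2 : Real.logb 2 ((1 + s1) ^ p) = p * Real.logb 2 (1 + s1) := by
      rw [Real.logb, Real.logb, Real.log_rpow (by linarith)]; ring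
    have hlt : Real.logb 2 (1 + q * s1) < Real.logb 2 ((1 + s1) ^ p) :=
      Real.logb_lt_logb hb (by linarith) key
    rw [hlog2] at hlt
    rw [hlog1]
    linarith
end

section
/- Let 0 < s1 < s2 and β1 > β2 > 0 with β1·s1/(1+s1) ≤ β2·s2/(1+s2). Then for all p ∈ [0,1], β2·log(1+p·s2) − β1·log(1+p·s1) ≤ β2·log(1+s2) − β1·log(1+s1), i.e., the weighted rate objective is maximized at p = 1 (all power to the strong user). -/
theorem max_at_strong_user (s1 s2 β1 β2 : ℝ) (hs1 : 0 < s1) (hs12 : s1 < s2)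
    (hb2 : 0 < β2) (hb12 : β2 < β1)
    (hτ : β1 * s1 / (1 + s1) ≤ β2 * s2 / (1 + s2)) :
    ∀ p ∈ Set.Icc (0:ℝ) 1,
      β2 * Real.log (1 + p * s2) - β1 * Real.log (1 + p * s1)
        ≤ β2 * Real.log (1 + s2) - β1 * Real.log (1 + s1) := by
  have hs2 : 0 < s2 := hs1.trans hs12
  have hb1 : 0 < β1 := hb2.trans hb12
  -- cross-multiplied form of hτ
  have hcross : β1 * s1 * (1 + s2) ≤ β2 * s2 * (1 + s1) := by
    rw [div_le_div_iff₀ (by linarith) (by linarith)] at hτ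
    linarith
  set f : ℝ → ℝ := fun p => β2 * Real.log (1 + p * s2) - β1 * Real.log (1 + p * s1) with hf
  have hpos : ∀ s : ℝ, 0 < s → ∀ p : ℝ, 0 ≤ p → (0:ℝ) < 1 + p * s := by
    intro s hs p hp
    nlinarith
  have hmono : MonotoneOn f (Set.Icc 0 1) := by
    apply monotoneOn_of_deriv_nonneg (convex_Icc 0 1)
    · apply ContinuousOn.sub
      · apply ContinuousOn.mul continuousOn_const
        apply ContinuousOn.log
        · fun_prop
        · intro p hp
          exact ne_of_gt (hpos s2 hs2 p hp.1)
      · apply ContinuousOn.mul continuousOn_const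
        apply ContinuousOn.log
        · fun_prop
        · intro p hp
          exact ne_of_gt (hpos s1 hs1 p hp.1)
    · intro p hp
      rw [interior_Icc] at hp
      have h1 : (0:ℝ) < 1 + p * s1 := hpos s1 hs1 p hp.1.le
      have h2 : (0:ℝ) < 1 + p * s2 := hpos s2 hs2 p hp.1.le
      have d1 : HasDerivAt (fun q : ℝ => Real.log (1 + q * s1)) (s1 / (1 + p * s1)) p := by
        have : HasDerivAt (fun q : ℝ => 1 + q * s1) s1 p := by
          simpa using ((hasDerivAt_id p).mul_const s1).const_add 1
        simpa using this.log (ne_of_gt h1)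
      have d2 : HasDerivAt (fun q : ℝ => Real.log (1 + q * s2)) (s2 / (1 + p * s2)) p := by
        have : HasDerivAt (fun q : ℝ => 1 + q * s2) s2 p := by
          simpa using ((hasDerivAt_id p).mul_const s2).const_add 1
        simpa using this.log (ne_of_gt h2)
      exact ((d2.const_mul β2).sub (d1.const_mul β1)).differentiableAt.differentiableWithinAt
    · intro p hp
      rw [interior_Icc] at hp
      have h1 : (0:ℝ) < 1 + p * s1 := hpos s1 hs1 p hp.1.le
      have h2 : (0:ℝ) < 1 + p * s2 := hpos s2 hs2 p hp.1.le
      have d1 : HasDerivAt (fun q : ℝ => Real.log (1 + q * s1)) (s1 / (1 + p * s1)) p := by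
        have : HasDerivAt (fun q : ℝ => 1 + q * s1) s1 p := by
          simpa using ((hasDerivAt_id p).mul_const s1).const_add 1
        simpa using this.log (ne_of_gt h1)
      have d2 : HasDerivAt (fun q : ℝ => Real.log (1 + q * s2)) (s2 / (1 + p * s2)) p := by
        have : HasDerivAt (fun q : ℝ => 1 + q * s2) s2 p := by
          simpa using ((hasDerivAt_id p).mul_const s2).const_add 1
        simpa using this.log (ne_of_gt h2)
      have hd : HasDerivAt f (β2 * (s2 / (1 + p * s2)) - β1 * (s1 / (1 + p * s1))) p :=
        (d2.const_mul β2).sub (d1.const_mul β1)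
      rw [hd.deriv]
      rw [sub_nonneg, mul_div_assoc', mul_div_assoc', div_le_div_iff₀ h1 h2]
      obtain ⟨hp0, hp1⟩ := hp
      have h0 : β1 * s1 ≤ β2 * s2 := by nlinarith [mul_pos (mul_pos hs1 hs2) (sub_pos.2 hb12)]
      nlinarith [mul_nonneg hp0.le (sub_nonneg.2 hcross),
        mul_nonneg (sub_nonneg.2 hp1.le) (sub_nonneg.2 h0)]
  intro p hp
  have := hmono hp (Set.mem_Icc.2 ⟨zero_le_one, le_refl 1⟩) hp.2
  simpa [hf] using this
end

section
/- Let 0 < s1 < s2 and β1, β2 > 0 with β1·s1 ≥ β2·s2. Then for all p ∈ [0,1], β2·log(1+p·s2) − β1·log(1+p·s1) ≤ 0, i.e., the objective is maximized at p = 0 (all power to the weak user). -/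
theorem max_at_weak_user (s1 s2 β1 β2 : ℝ) (hs1 : 0 < s1) (hs12 : s1 < s2)
    (hb1 : 0 < β1) (hb2 : 0 < β2) (hν : β1 * s1 ≥ β2 * s2) :
    ∀ p ∈ Set.Icc (0:ℝ) 1,
      β2 * Real.log (1 + p * s2) - β1 * Real.log (1 + p * s1) ≤ 0 := by
  intro p hp
  obtain ⟨hp0, hp1⟩ := hp
  have h1 : (0:ℝ) < 1 + p * s1 := by nlinarith
  have hr : (1:ℝ) ≤ s2 / s1 := (one_le_div hs1).2 hs12.le
  have hbern : 1 + (p * s1) * (s2 / s1) ≤ (1 + p * s1) ^ (s2 / s1) := by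
    have := one_add_mul_self_le_rpow_one_add (s := p * s1) (by nlinarith) hr
    linarith [this]
  have heq : (p * s1) * (s2 / s1) = p * s2 := by field_simp
  rw [heq] at hbern
  have hlog : Real.log (1 + p * s2) ≤ (s2 / s1) * Real.log (1 + p * s1) := by
    calc Real.log (1 + p * s2) ≤ Real.log ((1 + p * s1) ^ (s2 / s1)) :=
          Real.log_le_log (by nlinarith) hbern
      _ = (s2 / s1) * Real.log (1 + p * s1) := Real.log_rpow h1 _
  have hlognn : 0 ≤ Real.log (1 + p * s1) :=
    Real.log_nonneg (by nlinarith)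
  have h2 : β2 * (s2 / s1) ≤ β1 := by
    rw [mul_div_assoc', div_le_iff₀ hs1]
    nlinarith
  nlinarith [mul_le_mul_of_nonneg_left hlog hb2.le,
    mul_le_mul_of_nonneg_right h2 hlognn]
end

section
/- Let s1 ≤ ... ≤ sL be positive, β1,...,βL > 0, and consider y(p) = Σ_l βl·log(1 + pl·sl/(p̄l·sl+1)) on the simplex {p ≥ 0, Σ pl = 1}. For indices j > k, the partial derivatives at a point p with p_{k+1} = ... = p_{j-1} = 0 satisfy ∂y/∂pj − ∂y/∂pk = βj·sj/(1 + p̄k·sj) − βk·sk/(1 + p̄k·sk) (where p̄k = Σ_{l>k} pl). In particular ∂y/∂pj > ∂y/∂pk iff (sj·βj)/(sk·βk) > (1 + p̄k·sj)/(1 + p̄k·sk). -/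
open Finset

private lemma pdd_aux1 (b sk pk d : ℝ) (hd : d ≠ 0) (hdq : d + pk * sk ≠ 0) :
    b * ((1 + pk * sk * d⁻¹)⁻¹ * ((0:ℝ) * sk * d⁻¹ + pk * sk * -(d⁻¹ * (1 * sk) * d⁻¹))) -
    b * ((1 + pk * sk * d⁻¹)⁻¹ * (1 * sk * d⁻¹ + pk * sk * -(d⁻¹ * ((0:ℝ) * sk) * d⁻¹)))
    = -(b * sk / d) := by
  have h1 : (1 + pk * sk * d⁻¹) = (d + pk * sk) / d := by field_simp
  rw [h1]
  field_simp
  ring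

private lemma pdd_aux2 (b sk pk d : ℝ) (hd : d ≠ 0) (hdq : d + pk * sk ≠ 0) :
    b * ((1 + pk * sk * d⁻¹)⁻¹ * (1 * sk * d⁻¹ + pk * sk * -(d⁻¹ * ((0:ℝ) * sk) * d⁻¹))) -
    b * ((1 + pk * sk * d⁻¹)⁻¹ * ((0:ℝ) * sk * d⁻¹ + pk * sk * -(d⁻¹ * ((0:ℝ) * sk) * d⁻¹)))
    = b * sk / (d + pk * sk) := by
  have h1 : (1 + pk * sk * d⁻¹) = (d + pk * sk) / d := by field_simp
  rw [h1]
  field_simp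
  ring

set_option maxHeartbeats 1000000 in
theorem partial_derivative_difference (L : ℕ) (s β : Fin L → ℝ)
    (hs : ∀ l, 0 < s l) (hmono : Monotone s) (hβ : ∀ l, 0 < β l)
    (p : Fin L → ℝ) (hp : ∀ l, 0 ≤ p l) (hsum : ∑ l, p l = 1)
    (k j : Fin L) (hkj : k < j) (hmid : ∀ l, k < l → l < j → p l = 0) :
    let y : (Fin L → ℝ) → ℝ := fun x => ∑ l, β l *
      Real.log (1 + x l * s l /
        ((∑ m ∈ Finset.univ.filter (fun m => l < m), x m) * s l + 1))
    let pbark : ℝ := ∑ m ∈ Finset.univ.filter (fun m => k < m), p m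
    (fderiv ℝ y p (Pi.single j 1) - fderiv ℝ y p (Pi.single k 1)
        = β j * s j / (1 + pbark * s j) - β k * s k / (1 + pbark * s k)) ∧
    (fderiv ℝ y p (Pi.single k 1) < fderiv ℝ y p (Pi.single j 1) ↔
      (1 + pbark * s j) / (1 + pbark * s k) < (s j * β j) / (s k * β k)) := by
  intro y pbark
  classical
  set F : Fin L → Finset (Fin L) := fun l => Finset.univ.filter (fun m => l < m) with hF
  set S : Fin L → ℝ := fun l => ∑ m ∈ F l, p m with hSdef
  have hS0 : ∀ l, 0 ≤ S l := fun l => Finset.sum_nonneg fun m _ => hp m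
  have hDpos : ∀ l, 0 < S l * s l + 1 := fun l => by nlinarith [hS0 l, (hs l).le, mul_nonneg (hS0 l) (hs l).le]
  have hgpos : ∀ l, 0 < 1 + p l * s l * (S l * s l + 1)⁻¹ := fun l => by
    have := mul_nonneg (mul_nonneg (hp l) (hs l).le) (inv_nonneg.2 (hDpos l).le)
    linarith
  -- derivative of each summand
  have key : ∀ l : Fin L, ∃ Φ : (Fin L → ℝ) →L[ℝ] ℝ,
      HasFDerivAt (fun x : Fin L → ℝ => β l * Real.log (1 + x l * s l /
        ((∑ m ∈ F l, x m) * s l + 1))) Φ p ∧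
      ∀ v : Fin L → ℝ, Φ v = β l * ((1 + p l * s l * (S l * s l + 1)⁻¹)⁻¹ *
        (v l * s l * (S l * s l + 1)⁻¹ +
          p l * s l * -((S l * s l + 1)⁻¹ * ((∑ m ∈ F l, v m) * s l) * (S l * s l + 1)⁻¹))) := by
    intro l
    have h1 : HasFDerivAt (fun x : Fin L → ℝ => x l) (ContinuousLinearMap.proj (R := ℝ) l) p :=
      hasFDerivAt_apply l p
    have h2 : HasFDerivAt (fun x : Fin L → ℝ => ∑ m ∈ F l, x m)
        (∑ m ∈ F l, ContinuousLinearMap.proj (R := ℝ) m) p :=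
      HasFDerivAt.fun_sum fun m _ => hasFDerivAt_apply m p
    have hN := h1.mul_const (s l)
    have hDd := (h2.mul_const (s l)).add_const 1
    have hDne : (∑ m ∈ F l, p m) * s l + 1 ≠ 0 := (hDpos l).ne'
    have hinv : HasFDerivAt (fun x : Fin L → ℝ => ((∑ m ∈ F l, x m) * s l + 1)⁻¹)
        ((-(ContinuousLinearMap.mulLeftRight ℝ ℝ ((S l * s l + 1)⁻¹) ((S l * s l + 1)⁻¹))).comp
          (s l • (∑ m ∈ F l, ContinuousLinearMap.proj (R := ℝ) m))) p := by
      exact (hasFDerivAt_inv' (𝕜 := ℝ) hDne).comp p hDd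
    have hmul := hN.mul hinv
    have hadd := hmul.const_add 1
    have hne : (1 : ℝ) + p l * s l * ((∑ m ∈ F l, p m) * s l + 1)⁻¹ ≠ 0 := (hgpos l).ne'
    have hlog := hadd.log hne
    have hfin := hlog.const_mul (β l)
    refine ⟨β l •
      ((1 + p l * s l * ((∑ m ∈ F l, p m) * s l + 1)⁻¹)⁻¹ •
        ((p l * s l) •
            (-(ContinuousLinearMap.mulLeftRight ℝ ℝ ((S l * s l + 1)⁻¹) ((S l * s l + 1)⁻¹))).comp
              (s l • ∑ m ∈ F l, ContinuousLinearMap.proj (R := ℝ) m) +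
          ((∑ m ∈ F l, p m) * s l + 1)⁻¹ • s l • ContinuousLinearMap.proj l)), ?_, ?_⟩
    · simp only [div_eq_mul_inv]
      exact hfin
    · intro v
      simp only [ContinuousLinearMap.smul_apply, ContinuousLinearMap.add_apply,
        ContinuousLinearMap.coe_comp', Function.comp_apply, ContinuousLinearMap.neg_apply,
        ContinuousLinearMap.mulLeftRight_apply, ContinuousLinearMap.coe_sum',
        Finset.sum_apply, ContinuousLinearMap.proj_apply, smul_eq_mul]
      simp only [hSdef]
      ring
  choose Φ hΦ hval using key
  have hysum : HasFDerivAt y (∑ l, Φ l) p := HasFDerivAt.fun_sum fun l _ => hΦ l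
  have hfd : fderiv ℝ y p = ∑ l, Φ l := hysum.fderiv
  have happ : ∀ v : Fin L → ℝ, fderiv ℝ y p v = ∑ l, Φ l v := by
    intro v
    rw [hfd]
    simp [ContinuousLinearMap.coe_sum', Finset.sum_apply]
  have hvals : ∀ l i : Fin L, Φ l (Pi.single i 1) =
      β l * ((1 + p l * s l * (S l * s l + 1)⁻¹)⁻¹ *
        ((if l = i then (1:ℝ) else 0) * s l * (S l * s l + 1)⁻¹ +
          p l * s l * -((S l * s l + 1)⁻¹ * ((if l < i then (1:ℝ) else 0) * s l) *
            (S l * s l + 1)⁻¹))) := by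
    intro l i
    rw [hval l (Pi.single i 1)]
    have e1 : (Pi.single i 1 : Fin L → ℝ) l = if l = i then (1:ℝ) else 0 := by simp [Pi.single_apply]
    have e2 : (∑ m ∈ F l, (Pi.single i 1 : Fin L → ℝ) m) = if l < i then (1:ℝ) else 0 := by
      rw [Finset.sum_pi_single' i 1 (F l)]
      simp [hF]
    rw [e1, e2]
  set f : Fin L → ℝ := fun l => Φ l (Pi.single j 1) - Φ l (Pi.single k 1) with hfdef
  have hdiff : fderiv ℝ y p (Pi.single j 1) - fderiv ℝ y p (Pi.single k 1) = ∑ l, f l := by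
    rw [happ, happ, ← Finset.sum_sub_distrib]
  have hzero : ∀ l : Fin L, l ≠ k → l ≠ j → f l = 0 := by
    intro l hlk hlj
    have hDl := (hDpos l).ne'
    rw [hfdef]
    by_cases h1 : l < k
    · have h2 : l < j := h1.trans hkj
      simp only [hvals, if_neg hlj, if_neg hlk, if_pos h1, if_pos h2]
      ring
    · have hkl : k < l := lt_of_le_of_ne (not_lt.1 h1) (Ne.symm hlk)
      by_cases h2 : l < j
      · have hp0 : p l = 0 := hmid l hkl h2
        simp only [hvals, if_neg hlj, if_neg hlk, if_neg h1, if_pos h2, hp0]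
        ring
      · simp only [hvals, if_neg hlj, if_neg hlk, if_neg h1, if_neg h2]
        ring
  have hkne : k ≠ j := hkj.ne
  have hsum2 : ∑ l, f l = f k + f j := by
    rw [← Finset.sum_pair hkne]
    refine (Finset.sum_subset (Finset.subset_univ _) ?_).symm
    intro x _ hx
    simp only [Finset.mem_insert, Finset.mem_singleton, not_or] at hx
    exact hzero x hx.1 hx.2
  have hkey : S k = p j + S j := by
    have hsub : insert j (F j) ⊆ F k := by
      intro m hm
      simp only [Finset.mem_insert, hF, Finset.mem_filter, Finset.mem_univ, true_and] at hm ⊢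
      rcases hm with rfl | hm
      · exact hkj
      · exact hkj.trans hm
    have hz : ∀ x ∈ F k, x ∉ insert j (F j) → p x = 0 := by
      intro x hxk hxj
      simp only [hF, Finset.mem_filter, Finset.mem_univ, true_and] at hxk
      simp only [Finset.mem_insert, hF, Finset.mem_filter, Finset.mem_univ, true_and,
        not_or, not_lt] at hxj
      exact hmid x hxk (lt_of_le_of_ne hxj.2 hxj.1)
    have hjnot : j ∉ F j := by simp [hF]
    calc S k = ∑ m ∈ F k, p m := rfl
      _ = ∑ m ∈ insert j (F j), p m := (Finset.sum_subset hsub hz).symm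
      _ = p j + S j := Finset.sum_insert hjnot
  have hpb : pbark = S k := rfl
  have hAk : (0:ℝ) < 1 + S k * s k := by nlinarith [hS0 k, hs k, mul_nonneg (hS0 k) (hs k).le]
  have hAj : (0:ℝ) < 1 + S k * s j := by nlinarith [hS0 k, hs j, mul_nonneg (hS0 k) (hs j).le]
  have hfk : f k = -(β k * s k / (1 + S k * s k)) := by
    rw [hfdef]
    simp only [hvals, if_pos rfl, if_pos hkj, if_neg hkne, lt_irrefl, if_neg (lt_irrefl k)]
    have hDk := (hDpos k).ne'
    have hdq : (S k * s k + 1) + p k * s k ≠ 0 := by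
      nlinarith [hDpos k, mul_nonneg (hp k) (hs k).le]
    rw [show (1 + S k * s k : ℝ) = S k * s k + 1 from add_comm 1 _]
    exact pdd_aux1 (β k) (s k) (p k) (S k * s k + 1) hDk hdq
  have hfj : f j = β j * s j / (1 + S k * s j) := by
    rw [hfdef]
    have hnjk : ¬ j = k := fun h => hkne h.symm
    have hnjk' : ¬ j < k := fun h => absurd (h.trans hkj) (lt_irrefl j)
    simp only [hvals, if_pos rfl, if_neg hnjk, if_neg hnjk', lt_irrefl, if_neg (lt_irrefl j)]
    have hDj := (hDpos j).ne'
    have hdq : (S j * s j + 1) + p j * s j ≠ 0 := by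
      nlinarith [hDpos j, mul_nonneg (hp j) (hs j).le]
    rw [show (1 + S k * s j : ℝ) = (S j * s j + 1) + p j * s j by rw [hkey]; ring]
    exact pdd_aux2 (β j) (s j) (p j) (S j * s j + 1) hDj hdq
  have hmain : fderiv ℝ y p (Pi.single j 1) - fderiv ℝ y p (Pi.single k 1)
      = β j * s j / (1 + pbark * s j) - β k * s k / (1 + pbark * s k) := by
    rw [hdiff, hsum2, hfk, hfj, hpb]
    ring
  refine ⟨hmain, ?_⟩
  rw [← sub_pos, hmain, hpb, sub_pos, div_lt_div_iff₀ hAk hAj, div_lt_div_iff₀ hAk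
    (mul_pos (hs k) (hβ k))]
  constructor <;> intro h <;> nlinarith [h]
end

section
/- Let j > k with positive SNRs sk < sj and weights βk, βj > 0. Define g(q) = βj·sj/(1+q·sj) − βk·sk/(1+q·sk) for q ∈ [0,1]. If βk ≤ βj, then g(q) > 0 for all q ∈ [0,1]. Hence in the maximization of the SC weighted sum-rate objective, whenever βk ≤ βj and no intermediate user has positive power, the optimal power of the weaker user k is zero. -/
theorem weaker_user_purged (sk sj βk βj : ℝ) (hsk : 0 < sk) (hskj : sk < sj)
    (hβk : 0 < βk) (hβj : 0 < βj) (hβ : βk ≤ βj) :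
    ∀ q ∈ Set.Icc (0:ℝ) 1,
      0 < βj * sj / (1 + q * sj) - βk * sk / (1 + q * sk) := by
  rintro q ⟨hq0, hq1⟩
  have hdk : 0 < 1 + q * sk := by positivity
  have hsj : 0 < sj := hsk.trans hskj
  have hdj : 0 < 1 + q * sj := by positivity
  rw [sub_pos, div_lt_div_iff₀ hdk hdj]
  have h1 : βk * sk * (1 + q * sj) ≤ βj * sk * (1 + q * sj) := by
    have := mul_le_mul_of_nonneg_right hβ (le_of_lt (mul_pos hsk hdj))
    nlinarith
  have h2 : βj * sk * (1 + q * sj) < βj * sj * (1 + q * sk) := by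
    have : sk * (1 + q * sj) < sj * (1 + q * sk) := by nlinarith
    nlinarith
  linarith
end

section
/- Let k < j < m be three users with 0 < sk < sj < sm and weights with crossover points p_{j,k} and p_{m,j} (solutions of (1+p·sj)/(1+p·sk) = νj/νk and (1+p·sm)/(1+p·sj) = νm/νj respectively). If 0 ≤ p_{j,k} ≤ p_{m,j} ≤ 1, then at any maximizer of the SC weighted sum-rate objective in which users between k and j and between j and m have zero power, the middle user's optimal power satisfies p̂j = 0. -/
open Finset

lemma term_rw (b y q s : ℝ) (hy : 0 ≤ y) (hq : 0 ≤ q) (hs : 0 < s) :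
    b * Real.log (1 + y * s / (q * s + 1)) =
      b * (Real.log (1 + (q + y) * s) - Real.log (1 + q * s)) := by
  have h2 : (0:ℝ) < 1 + q * s := by positivity
  have h3 : (0:ℝ) < 1 + (q + y) * s := by positivity
  have h : 1 + y * s / (q * s + 1) = (1 + (q + y) * s) / (1 + q * s) := by
    field_simp; ring
  rw [h, Real.log_div h3.ne' h2.ne']

private lemma hasD (b1 b2 s1 s2 : ℝ) (hs1 : 0 < s1) (hs2 : 0 < s2) {t : ℝ} (ht : 0 ≤ t) :
    HasDerivAt (fun t => b2 * Real.log (1 + t * s2) - b1 * Real.log (1 + t * s1))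
      (b2 * (s2 / (1 + t * s2)) - b1 * (s1 / (1 + t * s1))) t := by
  have h1 : (1:ℝ) + t * s1 ≠ 0 := by positivity
  have h2 : (1:ℝ) + t * s2 ≠ 0 := by positivity
  exact ((((hasDerivAt_mul_const s2).const_add 1).log h2).const_mul b2).sub
    ((((hasDerivAt_mul_const s1).const_add 1).log h1).const_mul b1)

lemma crossover_lt (s1 s2 b1 b2 p a c : ℝ) (hs1 : 0 < s1) (hs12 : s1 < s2)
    (hb1 : 0 < b1) (hb2 : 0 < b2) (hp : 0 ≤ p)
    (heq : (1 + p * s2) / (1 + p * s1) = (b2 * s2) / (b1 * s1))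
    (ha : 0 ≤ a) (hac : a < c) (hcp : c ≤ p) :
    b1 * (Real.log (1 + c * s1) - Real.log (1 + a * s1)) <
      b2 * (Real.log (1 + c * s2) - Real.log (1 + a * s2)) := by
  have hs2 : 0 < s2 := hs1.trans hs12
  have hp1 : (0:ℝ) < 1 + p * s1 := by positivity
  have heq' : (1 + p * s2) * (b1 * s1) = b2 * s2 * (1 + p * s1) := by
    rw [div_eq_div_iff hp1.ne' (by positivity)] at heq; linarith [heq]
  have hb12 : b2 < b1 := by
    by_contra hcon
    push_neg at hcon
    have hA : b1 * s1 < b2 * s2 := by nlinarith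
    have hB : 0 ≤ p * s1 * s2 * (b2 - b1) := by
      have : 0 ≤ b2 - b1 := by linarith
      positivity
    nlinarith
  set f : ℝ → ℝ := fun t => b2 * Real.log (1 + t * s2) - b1 * Real.log (1 + t * s1) with hf
  have hmono : StrictMonoOn f (Set.Icc a c) := by
    apply strictMonoOn_of_deriv_pos (convex_Icc a c)
    · intro t ht
      exact ((hasD b1 b2 s1 s2 hs1 hs2 (ha.trans ht.1)).continuousAt).continuousWithinAt
    · intro t ht
      rw [interior_Icc] at ht
      have ht0 : 0 ≤ t := ha.trans ht.1.le
      rw [(hasD b1 b2 s1 s2 hs1 hs2 ht0).deriv]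
      have htp : t < p := lt_of_lt_of_le ht.2 hcp
      have h1 : (0:ℝ) < 1 + t * s1 := by positivity
      have h2 : (0:ℝ) < 1 + t * s2 := by positivity
      rw [sub_pos, mul_div_assoc' , mul_div_assoc', div_lt_div_iff₀ h1 h2]
      nlinarith [mul_pos (mul_pos hs1 hs2) (sub_pos.2 hb12), sub_pos.2 htp]
  have := hmono (Set.left_mem_Icc.2 hac.le) (Set.right_mem_Icc.2 hac.le) hac
  simp only [hf] at this
  linarith

lemma crossover_gt (s1 s2 b1 b2 p a c : ℝ) (hs1 : 0 < s1) (hs12 : s1 < s2)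
    (hb1 : 0 < b1) (hb2 : 0 < b2) (hp : 0 ≤ p)
    (heq : (1 + p * s2) / (1 + p * s1) = (b2 * s2) / (b1 * s1))
    (hpa : p ≤ a) (hac : a < c) :
    b2 * (Real.log (1 + c * s2) - Real.log (1 + a * s2)) <
      b1 * (Real.log (1 + c * s1) - Real.log (1 + a * s1)) := by
  have hs2 : 0 < s2 := hs1.trans hs12
  have hp1 : (0:ℝ) < 1 + p * s1 := by positivity
  have heq' : (1 + p * s2) * (b1 * s1) = b2 * s2 * (1 + p * s1) := by
    rw [div_eq_div_iff hp1.ne' (by positivity)] at heq; linarith [heq]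
  have hb12 : b2 < b1 := by
    by_contra hcon
    push_neg at hcon
    have hA : b1 * s1 < b2 * s2 := by nlinarith
    have hB : 0 ≤ p * s1 * s2 * (b2 - b1) := by
      have : 0 ≤ b2 - b1 := by linarith
      positivity
    nlinarith
  set f : ℝ → ℝ := fun t => b2 * Real.log (1 + t * s2) - b1 * Real.log (1 + t * s1) with hf
  have hmono : StrictAntiOn f (Set.Icc a c) := by
    apply strictAntiOn_of_deriv_neg (convex_Icc a c)
    · intro t ht
      exact ((hasD b1 b2 s1 s2 hs1 hs2 ((hp.trans hpa).trans ht.1)).continuousAt).continuousWithinAt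
    · intro t ht
      rw [interior_Icc] at ht
      have ht0 : 0 ≤ t := (hp.trans hpa).trans ht.1.le
      rw [(hasD b1 b2 s1 s2 hs1 hs2 ht0).deriv]
      have htp : p < t := lt_of_le_of_lt hpa ht.1
      have h1 : (0:ℝ) < 1 + t * s1 := by positivity
      have h2 : (0:ℝ) < 1 + t * s2 := by positivity
      rw [sub_neg, mul_div_assoc', mul_div_assoc', div_lt_div_iff₀ h2 h1]
      nlinarith [mul_pos (mul_pos hs1 hs2) (sub_pos.2 hb12), sub_pos.2 htp]
  have := hmono (Set.left_mem_Icc.2 hac.le) (Set.right_mem_Icc.2 hac.le) hac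
  simp only [hf] at this
  linarith

theorem middle_user_purged (L : ℕ) (s β : Fin L → ℝ)
    (hs : ∀ l, 0 < s l) (hmono : Monotone s) (hβ : ∀ l, 0 < β l)
    (k j m : Fin L) (hkj : k < j) (hjm : j < m)
    (hskj : s k < s j) (hsjm : s j < s m)
    (pjk pmj : ℝ)
    (hjk : (1 + pjk * s j) / (1 + pjk * s k) = (β j * s j) / (β k * s k))
    (hmj : (1 + pmj * s m) / (1 + pmj * s j) = (β m * s m) / (β j * s j))
    (h0 : 0 ≤ pjk) (h1 : pjk ≤ pmj) (h2 : pmj ≤ 1)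
    (phat : Fin L → ℝ) (hnn : ∀ l, 0 ≤ phat l) (hsum : ∑ l, phat l = 1)
    (hmax : ∀ x : Fin L → ℝ, (∀ l, 0 ≤ x l) → ∑ l, x l = 1 →
      (∑ l, β l * Real.log (1 + x l * s l /
          ((∑ i ∈ Finset.univ.filter (fun i => l < i), x i) * s l + 1)))
        ≤ ∑ l, β l * Real.log (1 + phat l * s l /
          ((∑ i ∈ Finset.univ.filter (fun i => l < i), phat i) * s l + 1)))
    (hmid1 : ∀ l, k < l → l < j → phat l = 0)
    (hmid2 : ∀ l, j < l → l < m → phat l = 0) :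
    phat j = 0 := by
  classical
  by_contra hpj
  have hp : 0 < phat j := lt_of_le_of_ne (hnn j) (Ne.symm hpj)
  have hjm' : j ≠ m := ne_of_lt hjm
  have hkj' : k ≠ j := ne_of_lt hkj
  set a : ℝ := ∑ i ∈ Finset.univ.filter (fun i => j < i), phat i with ha_def
  set qm : ℝ := ∑ i ∈ Finset.univ.filter (fun i => m < i), phat i with hqm_def
  have ha0 : 0 ≤ a := Finset.sum_nonneg fun i _ => hnn i
  have hqm0 : 0 ≤ qm := Finset.sum_nonneg fun i _ => hnn i
  -- a = phat m + qm
  have e1 : ∑ i ∈ Finset.univ.filter (fun i => m ≤ i), phat i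
      = ∑ i ∈ Finset.univ.filter (fun i => j < i), phat i := by
    apply Finset.sum_subset
    · intro i hi
      simp only [Finset.mem_filter, Finset.mem_univ, true_and] at *
      exact lt_of_lt_of_le hjm hi
    · intro i hi hni
      simp only [Finset.mem_filter, Finset.mem_univ, true_and] at hi hni
      exact hmid2 i hi (lt_of_not_ge hni)
  have e2 : Finset.univ.filter (fun i => m ≤ i)
      = insert m (Finset.univ.filter (fun i => m < i)) := by
    ext i
    simp only [Finset.mem_filter, Finset.mem_univ, true_and, Finset.mem_insert]
    constructor
    · intro h
      rcases eq_or_lt_of_le h with h | h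
      · exact Or.inl h.symm
      · exact Or.inr h
    · rintro (rfl | h)
      · exact le_refl i
      · exact h.le
  have ham : a = phat m + qm := by
    rw [ha_def, hqm_def, ← e1, e2, Finset.sum_insert (by simp)]
  -- sum above k
  have e3 : ∑ i ∈ Finset.univ.filter (fun i => j ≤ i), phat i
      = ∑ i ∈ Finset.univ.filter (fun i => k < i), phat i := by
    apply Finset.sum_subset
    · intro i hi
      simp only [Finset.mem_filter, Finset.mem_univ, true_and] at *
      exact lt_of_lt_of_le hkj hi
    · intro i hi hni
      simp only [Finset.mem_filter, Finset.mem_univ, true_and] at hi hni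
      exact hmid1 i hi (lt_of_not_ge hni)
  have e4 : Finset.univ.filter (fun i => j ≤ i)
      = insert j (Finset.univ.filter (fun i => j < i)) := by
    ext i
    simp only [Finset.mem_filter, Finset.mem_univ, true_and, Finset.mem_insert]
    constructor
    · intro h
      rcases eq_or_lt_of_le h with h | h
      · exact Or.inl h.symm
      · exact Or.inr h
    · rintro (rfl | h)
      · exact le_refl i
      · exact h.le
  have hQk : ∑ i ∈ Finset.univ.filter (fun i => k < i), phat i = phat j + a := by
    rw [ha_def, ← e3, e4, Finset.sum_insert (by simp)]
  rcases lt_or_ge a pmj with hcase | hcase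
  · -- move ε from j up to m
    set ε : ℝ := min (phat j) (pmj - a) with hε_def
    have hε : 0 < ε := lt_min hp (by linarith)
    have hεp : ε ≤ phat j := min_le_left _ _
    have hεa : a + ε ≤ pmj := by
      have := min_le_right (phat j) (pmj - a); linarith
    set x : Fin L → ℝ := fun l =>
      phat l + (if l = m then ε else 0) - (if l = j then ε else 0) with hx_def
    have hxj : x j = phat j - ε := by simp [hx_def, hjm']
    have hxm : x m = phat m + ε := by simp [hx_def, hjm'.symm]
    have hxnn : ∀ l, 0 ≤ x l := by
      intro l
      by_cases h1l : l = j
      · subst h1l; rw [hxj]; linarith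
      · by_cases h2l : l = m
        · rw [h2l, hxm]; linarith [hnn m]
        · simp only [hx_def, if_neg h1l, if_neg h2l]
          simpa using hnn l
    have hxsum : ∑ l, x l = 1 := by
      simp only [hx_def]
      rw [Finset.sum_sub_distrib, Finset.sum_add_distrib,
        Finset.sum_ite_eq' Finset.univ m (fun _ => ε),
        Finset.sum_ite_eq' Finset.univ j (fun _ => ε)]
      simp [hsum]
    have hQx : ∀ l : Fin L, ∑ i ∈ Finset.univ.filter (fun i => l < i), x i
        = (∑ i ∈ Finset.univ.filter (fun i => l < i), phat i)
          + (if l < m then ε else 0) - (if l < j then ε else 0) := by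
      intro l
      simp only [hx_def]
      rw [Finset.sum_sub_distrib, Finset.sum_add_distrib,
        Finset.sum_ite_eq' _ m (fun _ => ε),
        Finset.sum_ite_eq' _ j (fun _ => ε)]
      simp [Finset.mem_filter]
    have hQxj : ∑ i ∈ Finset.univ.filter (fun i => j < i), x i = a + ε := by
      rw [hQx j, if_pos hjm, if_neg (lt_irrefl j), ← ha_def]
      ring
    have hQxm : ∑ i ∈ Finset.univ.filter (fun i => m < i), x i = qm := by
      rw [hQx m, if_neg (lt_irrefl m), if_neg (not_lt.2 (le_of_lt hjm)), ← hqm_def]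
      ring
    have hzero : ∀ l ∈ Finset.univ, l ∉ ({j, m} : Finset (Fin L)) →
        β l * Real.log (1 + x l * s l /
          ((∑ i ∈ Finset.univ.filter (fun i => l < i), x i) * s l + 1))
        - β l * Real.log (1 + phat l * s l /
          ((∑ i ∈ Finset.univ.filter (fun i => l < i), phat i) * s l + 1)) = 0 := by
      intro l _ hl
      simp only [Finset.mem_insert, Finset.mem_singleton, not_or] at hl
      obtain ⟨hlj, hlm⟩ := hl
      have hxl : x l = phat l := by simp [hx_def, hlj, hlm]
      rcases lt_trichotomy l j with h | h | h
      · rw [hxl, hQx l, if_pos (h.trans hjm), if_pos h, add_sub_cancel_right, sub_self]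
      · exact absurd h hlj
      · rcases lt_trichotomy l m with h2' | h2' | h2' 
        · have h0l : phat l = 0 := hmid2 l h h2'
          rw [hxl, h0l]
          simp
        · exact absurd h2' hlm
        · rw [hxl, hQx l, if_neg (not_lt.2 h2'.le), if_neg (not_lt.2 h.le),
            add_zero, sub_zero, sub_self]
    have hbig := hmax x hxnn hxsum
    have hKey : (∑ l, β l * Real.log (1 + x l * s l /
          ((∑ i ∈ Finset.univ.filter (fun i => l < i), x i) * s l + 1)))
        - (∑ l, β l * Real.log (1 + phat l * s l /
          ((∑ i ∈ Finset.univ.filter (fun i => l < i), phat i) * s l + 1)))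
        = (β j * Real.log (1 + x j * s j /
              ((∑ i ∈ Finset.univ.filter (fun i => j < i), x i) * s j + 1))
            - β j * Real.log (1 + phat j * s j /
              ((∑ i ∈ Finset.univ.filter (fun i => j < i), phat i) * s j + 1)))
          + (β m * Real.log (1 + x m * s m /
              ((∑ i ∈ Finset.univ.filter (fun i => m < i), x i) * s m + 1))
            - β m * Real.log (1 + phat m * s m /
              ((∑ i ∈ Finset.univ.filter (fun i => m < i), phat i) * s m + 1))) := by
      rw [← Finset.sum_sub_distrib,
        ← Finset.sum_subset (Finset.subset_univ ({j, m} : Finset (Fin L))) hzero,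
        Finset.sum_pair hjm']
    have e_txj : β j * Real.log (1 + x j * s j /
          ((∑ i ∈ Finset.univ.filter (fun i => j < i), x i) * s j + 1))
        = β j * (Real.log (1 + (a + phat j) * s j) - Real.log (1 + (a + ε) * s j)) := by
      rw [hxj, hQxj, term_rw (β j) (phat j - ε) (a + ε) (s j) (by linarith) (by linarith) (hs j)]
      have h3 : a + ε + (phat j - ε) = a + phat j := by ring
      rw [h3]
    have e_tpj : β j * Real.log (1 + phat j * s j /
          ((∑ i ∈ Finset.univ.filter (fun i => j < i), phat i) * s j + 1))
        = β j * (Real.log (1 + (a + phat j) * s j) - Real.log (1 + a * s j)) := by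
      rw [← ha_def, term_rw (β j) (phat j) a (s j) (hnn j) ha0 (hs j)]
    have e_txm : β m * Real.log (1 + x m * s m /
          ((∑ i ∈ Finset.univ.filter (fun i => m < i), x i) * s m + 1))
        = β m * (Real.log (1 + (a + ε) * s m) - Real.log (1 + qm * s m)) := by
      rw [hxm, hQxm, term_rw (β m) (phat m + ε) qm (s m) (by linarith [hnn m]) hqm0 (hs m)]
      have h4 : qm + (phat m + ε) = a + ε := by rw [ham]; ring
      rw [h4]
    have e_tpm : β m * Real.log (1 + phat m * s m /
          ((∑ i ∈ Finset.univ.filter (fun i => m < i), phat i) * s m + 1))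
        = β m * (Real.log (1 + a * s m) - Real.log (1 + qm * s m)) := by
      rw [← hqm_def, term_rw (β m) (phat m) qm (s m) (hnn m) hqm0 (hs m)]
      have h5 : qm + phat m = a := by rw [ham]; ring
      rw [h5]
    rw [e_txj, e_tpj, e_txm, e_tpm] at hKey
    have hlt := crossover_lt (s j) (s m) (β j) (β m) pmj a (a + ε) (hs j) hsjm
      (hβ j) (hβ m) (h0.trans h1) hmj ha0 (by linarith) hεa
    linarith [hbig, hKey, hlt]
  · -- move ε from j down to k
    set ε : ℝ := min (phat j) (a + phat j - pjk) with hε_def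
    have hε : 0 < ε := lt_min hp (by linarith)
    have hεp : ε ≤ phat j := min_le_left _ _
    have hεc : pjk ≤ phat j + a - ε := by
      have := min_le_right (phat j) (a + phat j - pjk); linarith
    set x : Fin L → ℝ := fun l =>
      phat l + (if l = k then ε else 0) - (if l = j then ε else 0) with hx_def
    have hxj : x j = phat j - ε := by simp [hx_def, hkj'.symm]
    have hxk : x k = phat k + ε := by simp [hx_def, hkj']
    have hxnn : ∀ l, 0 ≤ x l := by
      intro l
      by_cases h1l : l = j
      · subst h1l; rw [hxj]; linarith
      · by_cases h2l : l = k
        · rw [h2l, hxk]; linarith [hnn k]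
        · simp only [hx_def, if_neg h1l, if_neg h2l]
          simpa using hnn l
    have hxsum : ∑ l, x l = 1 := by
      simp only [hx_def]
      rw [Finset.sum_sub_distrib, Finset.sum_add_distrib,
        Finset.sum_ite_eq' Finset.univ k (fun _ => ε),
        Finset.sum_ite_eq' Finset.univ j (fun _ => ε)]
      simp [hsum]
    have hQx : ∀ l : Fin L, ∑ i ∈ Finset.univ.filter (fun i => l < i), x i
        = (∑ i ∈ Finset.univ.filter (fun i => l < i), phat i)
          + (if l < k then ε else 0) - (if l < j then ε else 0) := by
      intro l
      simp only [hx_def]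
      rw [Finset.sum_sub_distrib, Finset.sum_add_distrib,
        Finset.sum_ite_eq' _ k (fun _ => ε),
        Finset.sum_ite_eq' _ j (fun _ => ε)]
      simp [Finset.mem_filter]
    have hQxj : ∑ i ∈ Finset.univ.filter (fun i => j < i), x i = a := by
      rw [hQx j, if_neg (not_lt.2 (le_of_lt hkj)), if_neg (lt_irrefl j), ← ha_def]
      ring
    have hQxk : ∑ i ∈ Finset.univ.filter (fun i => k < i), x i = phat j + a - ε := by
      rw [hQx k, if_neg (lt_irrefl k), if_pos hkj, hQk]
      ring
    have hzero : ∀ l ∈ Finset.univ, l ∉ ({k, j} : Finset (Fin L)) →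
        β l * Real.log (1 + x l * s l /
          ((∑ i ∈ Finset.univ.filter (fun i => l < i), x i) * s l + 1))
        - β l * Real.log (1 + phat l * s l /
          ((∑ i ∈ Finset.univ.filter (fun i => l < i), phat i) * s l + 1)) = 0 := by
      intro l _ hl
      simp only [Finset.mem_insert, Finset.mem_singleton, not_or] at hl
      obtain ⟨hlk, hlj⟩ := hl
      have hxl : x l = phat l := by simp [hx_def, hlk, hlj]
      rcases lt_trichotomy l k with h | h | h
      · rw [hxl, hQx l, if_pos h, if_pos (h.trans hkj), add_sub_cancel_right, sub_self]
      · exact absurd h hlk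
      · rcases lt_trichotomy l j with h2' | h2' | h2'
        · have h0l : phat l = 0 := hmid1 l h h2'
          rw [hxl, h0l]
          simp
        · exact absurd h2' hlj
        · rw [hxl, hQx l, if_neg (not_lt.2 (le_of_lt (hkj.trans h2'))),
            if_neg (not_lt.2 h2'.le), add_zero, sub_zero, sub_self]
    have hbig := hmax x hxnn hxsum
    have hKey : (∑ l, β l * Real.log (1 + x l * s l /
          ((∑ i ∈ Finset.univ.filter (fun i => l < i), x i) * s l + 1)))
        - (∑ l, β l * Real.log (1 + phat l * s l /
          ((∑ i ∈ Finset.univ.filter (fun i => l < i), phat i) * s l + 1)))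
        = (β k * Real.log (1 + x k * s k /
              ((∑ i ∈ Finset.univ.filter (fun i => k < i), x i) * s k + 1))
            - β k * Real.log (1 + phat k * s k /
              ((∑ i ∈ Finset.univ.filter (fun i => k < i), phat i) * s k + 1)))
          + (β j * Real.log (1 + x j * s j /
              ((∑ i ∈ Finset.univ.filter (fun i => j < i), x i) * s j + 1))
            - β j * Real.log (1 + phat j * s j /
              ((∑ i ∈ Finset.univ.filter (fun i => j < i), phat i) * s j + 1))) := by
      rw [← Finset.sum_sub_distrib,
        ← Finset.sum_subset (Finset.subset_univ ({k, j} : Finset (Fin L))) hzero,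
        Finset.sum_pair hkj']
    have e_txk : β k * Real.log (1 + x k * s k /
          ((∑ i ∈ Finset.univ.filter (fun i => k < i), x i) * s k + 1))
        = β k * (Real.log (1 + (phat j + a + phat k) * s k)
            - Real.log (1 + (phat j + a - ε) * s k)) := by
      rw [hxk, hQxk, term_rw (β k) (phat k + ε) (phat j + a - ε) (s k)
        (by linarith [hnn k]) (by linarith) (hs k)]
      have h3 : phat j + a - ε + (phat k + ε) = phat j + a + phat k := by ring
      rw [h3]
    have e_tpk : β k * Real.log (1 + phat k * s k /
          ((∑ i ∈ Finset.univ.filter (fun i => k < i), phat i) * s k + 1))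
        = β k * (Real.log (1 + (phat j + a + phat k) * s k)
            - Real.log (1 + (phat j + a) * s k)) := by
      rw [hQk, term_rw (β k) (phat k) (phat j + a) (s k) (hnn k) (by linarith) (hs k)]
    have e_txj : β j * Real.log (1 + x j * s j /
          ((∑ i ∈ Finset.univ.filter (fun i => j < i), x i) * s j + 1))
        = β j * (Real.log (1 + (phat j + a - ε) * s j) - Real.log (1 + a * s j)) := by
      rw [hxj, hQxj, term_rw (β j) (phat j - ε) a (s j) (by linarith) ha0 (hs j)]
      have h4 : a + (phat j - ε) = phat j + a - ε := by ring
      rw [h4]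
    have e_tpj : β j * Real.log (1 + phat j * s j /
          ((∑ i ∈ Finset.univ.filter (fun i => j < i), phat i) * s j + 1))
        = β j * (Real.log (1 + (phat j + a) * s j) - Real.log (1 + a * s j)) := by
      rw [← ha_def, term_rw (β j) (phat j) a (s j) (hnn j) ha0 (hs j)]
      have h5 : a + phat j = phat j + a := by ring
      rw [h5]
    rw [e_txk, e_tpk, e_txj, e_tpj] at hKey
    have hlt := crossover_gt (s k) (s j) (β k) (β j) pjk (phat j + a - ε)
      (phat j + a) (hs k) hskj (hβ k) (hβ j) h0 hjk hεc (by linarith)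
    linarith [hbig, hKey, hlt]
end

section
/- Let ℓ1 < ℓ2 < ... < ℓK be the surviving users with SNRs s_{ℓ1} < ... < s_{ℓK} and crossovers satisfying 1 > p_{ℓ2,ℓ1} > p_{ℓ3,ℓ2} > ... > p_{ℓK,ℓ_{K-1}} > 0. Then the power allocation p̂_{ℓK} = p_{ℓK,ℓ_{K-1}}, p̂_{ℓl} = p_{ℓl,ℓ_{l-1}} − p_{ℓ_{l+1},ℓl} for 2 ≤ l ≤ K−1, p̂_{ℓ1} = 1 − p_{ℓ2,ℓ1}, gives strictly positive powers summing to 1, and satisfies the KKT stationarity conditions βℓj·sℓj/(1 + p̄_{ℓ_{j-1}}·sℓj) = λ for a common λ at consecutive crossover points, i.e., p̄_{ℓ_{l-1}} = p_{ℓ_l, ℓ_{l-1}} for all l = 2,...,K. -/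
theorem optimal_power_allocation (K : ℕ) (hK : 2 ≤ K) (s β : ℕ → ℝ)
    (hs : ∀ l, 1 ≤ l → l ≤ K → 0 < s l)
    (hsmono : ∀ l, 2 ≤ l → l ≤ K → s (l-1) < s l)
    (hβ : ∀ l, 1 ≤ l → l ≤ K → 0 < β l) :
    let ν : ℕ → ℝ := fun l => β l * s l
    let q : ℕ → ℝ := fun l => (ν l - ν (l-1)) / (ν (l-1) * s l - ν l * s (l-1))
    let p : ℕ → ℝ := fun l =>
      if l = 1 then 1 - q 2 else if l = K then q K else q l - q (l+1)
    q 2 < 1 → 0 < q K → (∀ l, 2 ≤ l → l < K → q (l+1) < q l) →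
    ((∀ l, 1 ≤ l → l ≤ K → 0 < p l) ∧
     (∑ l ∈ Finset.Icc 1 K, p l = 1) ∧
     (∀ l, 2 ≤ l → l ≤ K → ∑ i ∈ Finset.Icc l K, p i = q l) ∧
     (∀ l, 2 ≤ l → l ≤ K →
        ν l / (1 + q l * s l) = ν (l-1) / (1 + q l * s (l-1)))) := by
  intro ν q p hq2 hqK hq
  -- positivity of q on [2,K]
  have qpos : ∀ l, 2 ≤ l → l ≤ K → 0 < q l := by
    have key : ∀ n l, K - l ≤ n → 2 ≤ l → l ≤ K → 0 < q l := by
      intro n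
      induction n with
      | zero =>
        intro l h0 h2 hK'
        have : l = K := by omega
        subst this; exact hqK
      | succ n ih =>
        intro l hn h2 hK'
        by_cases h : l = K
        · subst h; exact hqK
        · have h1 : q (l+1) < q l := hq l h2 (by omega)
          have h2' : 0 < q (l+1) := ih (l+1) (by omega) (by omega) (by omega)
          linarith
    intro l h2 hK'
    exact key (K - l) l le_rfl h2 hK'
  -- partial sums
  have icc_split : ∀ l, l ≤ K → Finset.Icc l K = insert l (Finset.Icc (l+1) K) := by
    intro l hl
    ext x
    simp only [Finset.mem_Icc, Finset.mem_insert]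
    omega
  have psum : ∀ l, 2 ≤ l → l ≤ K → ∑ i ∈ Finset.Icc l K, p i = q l := by
    have key : ∀ n l, K - l ≤ n → 2 ≤ l → l ≤ K → ∑ i ∈ Finset.Icc l K, p i = q l := by
      intro n
      induction n with
      | zero =>
        intro l h0 h2 hK'
        have hlK : l = K := by omega
        subst hlK
        rw [Finset.Icc_self, Finset.sum_singleton]
        show (if l = 1 then _ else if l = l then q l else _) = q l
        rw [if_neg (by omega), if_pos rfl]
      | succ n ih =>
        intro l hn h2 hK'
        by_cases h : l = K
        · subst h
          rw [Finset.Icc_self, Finset.sum_singleton]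
          show (if l = 1 then _ else if l = l then q l else _) = q l
          rw [if_neg (by omega), if_pos rfl]
        · rw [icc_split l hK', Finset.sum_insert (by simp)]
          rw [ih (l+1) (by omega) (by omega) (by omega)]
          show (if l = 1 then _ else if l = K then _ else q l - q (l+1)) + q (l+1) = q l
          rw [if_neg (by omega), if_neg h]
          ring
    intro l h2 hK'
    exact key (K - l) l le_rfl h2 hK'
  refine ⟨?_, ?_, psum, ?_⟩
  · -- positivity of p
    intro l h1 hlK
    show 0 < if l = 1 then 1 - q 2 else if l = K then q K else q l - q (l+1)
    by_cases h : l = 1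
    · rw [if_pos h]; linarith
    · rw [if_neg h]
      by_cases h' : l = K
      · rw [if_pos h']; exact hqK
      · rw [if_neg h']
        have := hq l (by omega) (by omega)
        linarith
  · -- total sum
    rw [icc_split 1 (by omega), Finset.sum_insert (by simp), psum 2 le_rfl hK]
    show (if (1:ℕ) = 1 then 1 - q 2 else _) + q 2 = 1
    rw [if_pos rfl]; ring
  · -- KKT
    intro l h2 hlK
    have hql : 0 < q l := qpos l h2 hlK
    set a := ν (l-1) with ha
    set b := ν l with hb
    have hD : b - a ≠ 0 ∨ a * s l - b * s (l-1) ≠ 0 := by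
      by_contra hc
      push_neg at hc
      have : q l = 0 := by
        show (b - a) / (a * s l - b * s (l-1)) = 0
        rw [hc.1]; simp
      linarith
    have hDne : a * s l - b * s (l-1) ≠ 0 := by
      rcases hD with h | h
      · intro hc
        have : q l = 0 := by
          show (b - a) / (a * s l - b * s (l-1)) = 0
          rw [hc]; simp
        linarith
      · exact h
    have hqval : q l * (a * s l - b * s (l-1)) = b - a := by
      show (b - a) / (a * s l - b * s (l-1)) * (a * s l - b * s (l-1)) = b - a
      field_simp
    have hsl : 0 < s l := hs l (by omega) hlK
    have hsl1 : 0 < s (l-1) := hs (l-1) (by omega) (by omega)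
    have hd1 : (0:ℝ) < 1 + q l * s l := by positivity
    have hd2 : (0:ℝ) < 1 + q l * s (l-1) := by positivity
    rw [div_eq_div_iff (by linarith) (by linarith)]
    nlinarith [hqval]
end
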